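/- Group closeness C(S) = |V| / f(S) (with f the farness) is not submodular in general: there exists a finite undirected connected unweighted graph G = (V,E), nonempty sets S ⊆ T ⊆ V, and a vertex v ∈ V\T such that C(S∪{v}) − C(S) < C(T∪{v}) − C(T). -/

import Mathlib

/-!
On the star `K_{1,3}` with centre `0`, take `S = {1}`, `T = {1, 2}` and `v = 0`. Adding the centre
brings every remaining vertex to distance one, so it collapses the farness of `S` from `5` to `2`
but that of `T` from `3` to `1`. Closeness is the reciprocal of farness, so the drop `3 → 1` gains
more closeness (`4 - 4/3`) than the larger drop `5 → 2` (`2 - 4/5`).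
-/

open SimpleGraph Finset

/-- Distance from a group `S` to a vertex `x` in an unweighted graph. -/
noncomputable def setDist {V : Type*} (G : SimpleGraph V) (S : Finset V) (x : V) : ℕ :=
  sInf {d | ∃ s ∈ S, G.dist s x = d}

/-- Farness of a group `S`. -/
noncomputable def farness {V : Type*} [Fintype V] [DecidableEq V]
    (G : SimpleGraph V) (S : Finset V) : ℕ :=
  ∑ x ∈ Sᶜ, setDist G S x

/-- Edge relation of the BFS DAG rooted at `S`. -/
def bfsEdge {V : Type*} (G : SimpleGraph V) (S : Finset V) (x y : V) : Prop :=
  G.Adj x y ∧ setDist G S y = setDist G S x + 1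

/-- Vertices reachable from `v` in the BFS DAG rooted at `S` (including `v`). -/
def reach {V : Type*} (G : SimpleGraph V) (S : Finset V) (v : V) : Set V :=
  {x | Relation.ReflTransGen (bfsEdge G S) v x}

section SetDist

variable {V : Type*} {G : SimpleGraph V} {S : Finset V} {s x : V} {k : ℕ}

theorem setDist_le_dist (hs : s ∈ S) : setDist G S x ≤ G.dist s x :=
  Nat.sInf_le ⟨s, hs, rfl⟩

theorem le_setDist (hS : S.Nonempty) (h : ∀ s ∈ S, k ≤ G.dist s x) : k ≤ setDist G S x := by
  obtain ⟨s, hs⟩ := hS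
  refine le_csInf ⟨_, s, hs, rfl⟩ ?_
  rintro _ ⟨t, ht, rfl⟩
  exact h t ht

theorem setDist_eq_of_forall_dist_eq (hS : S.Nonempty) (h : ∀ s ∈ S, G.dist s x = k) :
    setDist G S x = k := by
  obtain ⟨s, hs⟩ := hS
  refine le_antisymm ((setDist_le_dist hs).trans_eq (h s hs)) (le_setDist ⟨s, hs⟩ ?_)
  exact fun t ht => (h t ht).ge

theorem SimpleGraph.Connected.setDist_eq_one (hG : G.Connected) (hx : x ∉ S) (hs : s ∈ S)
    (hadj : G.Adj s x) : setDist G S x = 1 := by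
  refine le_antisymm ((setDist_le_dist hs).trans_eq (dist_eq_one_iff_adj.mpr hadj)) ?_
  refine le_setDist ⟨s, hs⟩ fun t ht => hG.pos_dist_of_ne ?_
  rintro rfl
  exact hx ht

end SetDist

section StarGraph

variable {V : Type*} {r u v x : V} {S : Finset V}

theorem dist_starGraph_of_ne_center (hu : u ≠ r) (hv : v ≠ r) (huv : u ≠ v) :
    (starGraph r).dist u v = 2 := by
  have hle : (starGraph r).dist u v ≤ 2 :=
    calc (starGraph r).dist u v ≤ (starGraph r).dist u r + (starGraph r).dist r v :=
          (connected_starGraph r).dist_triangle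
      _ = 2 := by
          rw [dist_eq_one_iff_adj.mpr (starGraph_center_adj' hu.symm),
            dist_eq_one_iff_adj.mpr (starGraph_center_adj hv.symm)]
  have hpos : 0 < (starGraph r).dist u v := (connected_starGraph r).pos_dist_of_ne huv
  have hne : (starGraph r).dist u v ≠ 1 := by
    rw [Ne, dist_eq_one_iff_adj, starGraph_adj]
    tauto
  omega

theorem setDist_starGraph_of_center_mem (hr : r ∈ S) (hx : x ∉ S) :
    setDist (starGraph r) S x = 1 :=
  (connected_starGraph r).setDist_eq_one hx hr (starGraph_center_adj (ne_of_mem_of_not_mem hr hx))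

theorem setDist_starGraph_center (hS : S.Nonempty) (hr : r ∉ S) :
    setDist (starGraph r) S r = 1 := by
  obtain ⟨s, hs⟩ := hS
  exact (connected_starGraph r).setDist_eq_one hr hs
    (starGraph_center_adj' (ne_of_mem_of_not_mem hs hr).symm)

theorem setDist_starGraph_of_center_notMem (hS : S.Nonempty) (hr : r ∉ S) (hx : x ∉ S)
    (hxr : x ≠ r) : setDist (starGraph r) S x = 2 :=
  setDist_eq_of_forall_dist_eq hS fun _ hs =>
    dist_starGraph_of_ne_center (ne_of_mem_of_not_mem hs hr) hxr (ne_of_mem_of_not_mem hs hx)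

variable [Fintype V] [DecidableEq V]

theorem farness_starGraph_of_center_mem (hr : r ∈ S) : farness (starGraph r) S = #Sᶜ := by
  rw [farness, card_eq_sum_ones]
  exact sum_congr rfl fun x hx => setDist_starGraph_of_center_mem hr (mem_compl.mp hx)

theorem farness_starGraph_of_center_notMem (hS : S.Nonempty) (hr : r ∉ S) :
    farness (starGraph r) S = 2 * #Sᶜ - 1 := by
  have hrc : r ∈ Sᶜ := mem_compl.mpr hr
  have hleaves : ∑ x ∈ Sᶜ.erase r, setDist (starGraph r) S x = 2 * #(Sᶜ.erase r) := by
    rw [mul_comm, card_eq_sum_ones, sum_mul, one_mul]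
    refine sum_congr rfl fun x hx => ?_
    obtain ⟨hxr, hx⟩ := mem_erase.mp hx
    exact setDist_starGraph_of_center_notMem hS hr (mem_compl.mp hx) hxr
  have hcard := card_erase_add_one hrc
  rw [farness, ← add_sum_erase _ _ hrc, setDist_starGraph_center hS hr, hleaves]
  omega

end StarGraph

theorem stmt11 :
    ∃ (n : ℕ) (G : SimpleGraph (Fin n)) (_ : DecidableRel G.Adj)
      (S T : Finset (Fin n)) (v : Fin n),
      G.Connected ∧ S.Nonempty ∧ S ⊆ T ∧ v ∉ T ∧ insert v T ≠ Finset.univ ∧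
        (n : ℝ) / (farness G (insert v S)) - (n : ℝ) / (farness G S) <
          (n : ℝ) / (farness G (insert v T)) - (n : ℝ) / (farness G T) := by
  refine ⟨4, starGraph 0, inferInstance, {1}, {1, 2}, 0, connected_starGraph 0,
    singleton_nonempty 1, by decide, by decide, by decide, ?_⟩
  have hSv : farness (starGraph (0 : Fin 4)) (insert 0 {1}) = 2 :=
    (farness_starGraph_of_center_mem (mem_insert_self 0 {1})).trans (by decide)
  have hTv : farness (starGraph (0 : Fin 4)) (insert 0 {1, 2}) = 1 :=
    (farness_starGraph_of_center_mem (mem_insert_self 0 {1, 2})).trans (by decide)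
  have hS : farness (starGraph (0 : Fin 4)) {1} = 5 :=
    (farness_starGraph_of_center_notMem (singleton_nonempty 1) (by decide)).trans (by decide)
  have hT : farness (starGraph (0 : Fin 4)) {1, 2} = 3 :=
    (farness_starGraph_of_center_notMem (insert_nonempty 1 {2}) (by decide)).trans (by decide)
  rw [hSv, hTv, hS, hT]
  norm_num
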